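/- On a non-degenerate triangle T, the nodal basis function of the sBDFM element dual to the functional 'mean over e_i of v·n_i' is φ_{n_i,0} = λ_j(3λ_j−2) t_k/(n_i·t_k) + λ_k(3λ_k−2) t_j/(n_i·t_j) + 6 λ_j λ_k n_i; that is, φ_{n_i,0} ∈ P^{2-}(T), its mean of normal component over e_i equals 1, and all eight other sBDFM nodal functionals vanish on it. -/

import Mathlib

open MeasureTheory
open scoped Classical

noncomputable section

/-- The plane. -/
abbrev V2 : Type := ℝ × ℝ

/-- Euclidean dot product on the plane. -/
def dot2 (u v : V2) : ℝ := u.1 * v.1 + u.2 * v.2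

/-- 2D cross product. -/
def cross2 (u v : V2) : ℝ := u.1 * v.2 - u.2 * v.1

/-- Euclidean norm on the plane. -/
def enorm2 (u : V2) : ℝ := Real.sqrt (u.1 ^ 2 + u.2 ^ 2)

/-- `f` is (the restriction of) a polynomial of total degree at most `k`. -/
def IsPolyDeg (k : ℕ) (f : V2 → ℝ) : Prop :=
  ∃ p : MvPolynomial (Fin 2) ℝ, p.totalDegree ≤ k ∧
    ∀ x : V2, f x = MvPolynomial.eval (fun i : Fin 2 => if i = 0 then x.1 else x.2) p

/-- A vector field whose two components are polynomials of degree at most `k`. -/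
def IsVPolyDeg (k : ℕ) (v : V2 → V2) : Prop :=
  IsPolyDeg k (fun x => (v x).1) ∧ IsPolyDeg k (fun x => (v x).2)

/-- partial derivative in the `x` direction -/
def pd1 (f : V2 → ℝ) (x : V2) : ℝ := fderiv ℝ f x (1, 0)

/-- partial derivative in the `y` direction -/
def pd2 (f : V2 → ℝ) (x : V2) : ℝ := fderiv ℝ f x (0, 1)

/-- `curl` of a scalar function: `(∂w/∂y, -∂w/∂x)`. -/
def curl2 (w : V2 → ℝ) : V2 → V2 := fun x => (pd2 w x, - pd1 w x)

/-- divergence of a planar vector field -/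
def div2 (v : V2 → V2) (x : V2) : ℝ :=
  pd1 (fun y => (v y).1) x + pd2 (fun y => (v y).2) x

/-- Parametrization of the segment from `p` to `q`. -/
def seg (p q : V2) (s : ℝ) : V2 := p + s • (q - p)

/-- A non-degenerate triangle, together with its barycentric coordinates `lam i`,
unit outward normals `nrm i` and unit tangents `tang i` of the edges `e i`
(the edge `e i` being opposite the vertex `a i`, joining `a (i+1)` and `a (i+2)`),
oriented so that `nrm i × tang i > 0`. -/
structure Triangle where
  a : Fin 3 → V2
  indep : AffineIndependent ℝ a
  lam : Fin 3 → V2 → ℝ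
  lam_affine : ∀ i, ∃ (L : V2 →ₗ[ℝ] ℝ) (c : ℝ), ∀ x, lam i x = L x + c
  lam_apply : ∀ i j, lam i (a j) = if i = j then (1 : ℝ) else 0
  nrm : Fin 3 → V2
  tang : Fin 3 → V2
  nrm_unit : ∀ i, enorm2 (nrm i) = 1
  tang_unit : ∀ i, enorm2 (tang i) = 1
  tang_parallel : ∀ i, ∃ c : ℝ, a (i + 2) - a (i + 1) = c • tang i
  nrm_orth : ∀ i, dot2 (nrm i) (tang i) = 0
  nrm_outward : ∀ i, dot2 (nrm i) (a i - a (i + 1)) < 0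
  orient : ∀ i, 0 < cross2 (nrm i) (tang i)

/-- The (closed) triangle as a subset of the plane. -/
def triSet (T : Triangle) : Set V2 := convexHull ℝ (Set.range T.a)

/-- Parametrization of the edge `e i` of `T` (from `a (i+1)` to `a (i+2)`). -/
def epara (T : Triangle) (i : Fin 3) (s : ℝ) : V2 := seg (T.a (i + 1)) (T.a (i + 2)) s

/-- Length of edge `e i`. -/
def elen (T : Triangle) (i : Fin 3) : ℝ := enorm2 (T.a (i + 2) - T.a (i + 1))

/-- Area of the triangle. -/
def areaT (T : Triangle) : ℝ := |cross2 (T.a 1 - T.a 0) (T.a 2 - T.a 0)| / 2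

/-- The normal component of `v` on each edge of `T` is a polynomial of degree at
most one along that edge. -/
def NormalP1 (T : Triangle) (v : V2 → V2) : Prop :=
  ∀ i : Fin 3, ∃ α β : ℝ, ∀ s ∈ Set.Icc (0 : ℝ) 1,
    dot2 (v (epara T i s)) (T.nrm i) = α + β * s

/-- Membership in `P^{2-}(T)`: vector-valued quadratic polynomials whose normal
components on the edges are of degree at most one. -/
def memP2m (T : Triangle) (v : V2 → V2) : Prop := IsVPolyDeg 2 v ∧ NormalP1 T v

/-- sBDFM nodal functional: mean over edge `e i` of `v·n_i`. -/
def fN0 (T : Triangle) (i : Fin 3) (v : V2 → V2) : ℝ :=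
  ∫ s in (0:ℝ)..1, dot2 (v (epara T i s)) (T.nrm i)

/-- sBDFM nodal functional: mean over edge `e i` of `v·n_i (λ_{i+1} − λ_{i+2})`. -/
def fN1 (T : Triangle) (i : Fin 3) (v : V2 → V2) : ℝ :=
  ∫ s in (0:ℝ)..1,
    dot2 (v (epara T i s)) (T.nrm i) *
      (T.lam (i + 1) (epara T i s) - T.lam (i + 2) (epara T i s))

/-- sBDFM nodal functional: mean over edge `e i` of `v·t_i`. -/
def fT0 (T : Triangle) (i : Fin 3) (v : V2 → V2) : ℝ :=
  ∫ s in (0:ℝ)..1, dot2 (v (epara T i s)) (T.tang i)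

/-- The claimed nodal basis function `φ_{n_i,0}` (with `j = i+1`, `k = i+2`). -/
def phiN0 (T : Triangle) (i : Fin 3) : V2 → V2 := fun x =>
  (T.lam (i + 1) x * (3 * T.lam (i + 1) x - 2) / dot2 (T.nrm i) (T.tang (i + 2)))
      • T.tang (i + 2)
  + (T.lam (i + 2) x * (3 * T.lam (i + 2) x - 2) / dot2 (T.nrm i) (T.tang (i + 1)))
      • T.tang (i + 1)
  + (6 * T.lam (i + 1) x * T.lam (i + 2) x) • T.nrm i

/-!
Along the edge `e_m`, parametrized by `s ∈ [0, 1]`, the barycentric coordinates are affine in `s`: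
on `e_i` one has `λ_j = 1 - s`, `λ_k = s`, while `λ_j = 0` on `e_j` and `λ_k = 0` on `e_k`.
Hence `φ · n_i = (1 - s)(1 - 3s) + s(3s - 2) + 6s(1 - s) = 1` on `e_i`, and on `e_j`, `e_k` the
only surviving term is a multiple of `t_m · n_m = 0`. On every edge `φ · t_m` is a combination of
`s(3s - 2)` and `(1 - s)(1 - 3s)`, both of mean zero. The denominators `n_i · t_j`, `n_i · t_k`
do not vanish because no two edges of a non-degenerate triangle are parallel.
-/

lemma isPolyDeg_const (k : ℕ) (c : ℝ) : IsPolyDeg k (fun _ => c) :=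
  ⟨MvPolynomial.C c, by simp, by simp⟩

lemma isPolyDeg_fst : IsPolyDeg 1 (fun x : V2 => x.1) :=
  ⟨MvPolynomial.X 0, by simp [MvPolynomial.totalDegree_X], by simp⟩

lemma isPolyDeg_snd : IsPolyDeg 1 (fun x : V2 => x.2) :=
  ⟨MvPolynomial.X 1, by simp [MvPolynomial.totalDegree_X], by simp⟩

namespace IsPolyDeg

variable {k l : ℕ} {f g : V2 → ℝ}

lemma mono (hkl : k ≤ l) (hf : IsPolyDeg k f) : IsPolyDeg l f := by
  obtain ⟨p, hp, hpf⟩ := hf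
  exact ⟨p, hp.trans hkl, hpf⟩

lemma add (hf : IsPolyDeg k f) (hg : IsPolyDeg k g) : IsPolyDeg k (fun x => f x + g x) := by
  obtain ⟨p, hp, hpf⟩ := hf
  obtain ⟨q, hq, hqg⟩ := hg
  exact ⟨p + q, (MvPolynomial.totalDegree_add p q).trans (max_le hp hq),
    fun x => by simp [hpf x, hqg x]⟩

lemma mul (hf : IsPolyDeg k f) (hg : IsPolyDeg l g) : IsPolyDeg (k + l) (fun x => f x * g x) := by
  obtain ⟨p, hp, hpf⟩ := hf
  obtain ⟨q, hq, hqg⟩ := hg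
  exact ⟨p * q, (MvPolynomial.totalDegree_mul p q).trans (add_le_add hp hq),
    fun x => by simp [hpf x, hqg x]⟩

lemma const_mul (c : ℝ) (hf : IsPolyDeg k f) : IsPolyDeg k (fun x => c * f x) :=
  (isPolyDeg_const 0 c).mul hf |>.mono (by omega)

lemma sub (hf : IsPolyDeg k f) (hg : IsPolyDeg k g) : IsPolyDeg k (fun x => f x - g x) := by
  simpa only [neg_one_mul, ← sub_eq_add_neg] using hf.add (hg.const_mul (-1))

end IsPolyDeg

lemma dot2_comm (u v : V2) : dot2 u v = dot2 v u := by
  simp only [dot2]; ring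

lemma dot2_self_eq_one {n : V2} (hn : enorm2 n = 1) : dot2 n n = 1 := by
  rw [enorm2, Real.sqrt_eq_one] at hn
  simp only [dot2]
  linear_combination hn

lemma eq_smul_perp_of_dot2_eq_zero {n v : V2} (hn : dot2 n n = 1) (hv : dot2 n v = 0) :
    v = cross2 n v • (-n.2, n.1) := by
  simp only [dot2] at hn hv
  ext <;> simp only [cross2, Prod.smul_fst, Prod.smul_snd, smul_eq_mul]
  · linear_combination -v.1 * hn + n.1 * hv
  · linear_combination -v.2 * hn + n.2 * hv

lemma fin3_eq_add_one_or_eq_add_two {m i : Fin 3} (h : m ≠ i) : m = i + 1 ∨ m = i + 2 := by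
  revert m i; decide

lemma integral_quadratic (a b c : ℝ) :
    ∫ s in (0 : ℝ)..1, a + b * s + c * s ^ 2 = a + b / 2 + c / 3 := by
  have hint : ∀ f : ℝ → ℝ, Continuous f → IntervalIntegrable f volume 0 1 :=
    fun f hf => hf.intervalIntegrable 0 1
  rw [intervalIntegral.integral_add (hint _ (by fun_prop)) (hint _ (by fun_prop)),
    intervalIntegral.integral_add (hint _ (by fun_prop)) (hint _ (by fun_prop)),
    intervalIntegral.integral_const_mul, intervalIntegral.integral_const_mul]
  simp [integral_pow]
  ring

lemma integral_bubble_pair (a b : ℝ) :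
    ∫ s in (0 : ℝ)..1, a * ((1 - s) * (3 * (1 - s) - 2)) + b * (s * (3 * s - 2)) = 0 := by
  have h : ∀ s : ℝ, a * ((1 - s) * (3 * (1 - s) - 2)) + b * (s * (3 * s - 2)) =
      a + (-4 * a - 2 * b) * s + (3 * a + 3 * b) * s ^ 2 := fun s => by ring
  simp only [h, integral_quadratic]
  ring

namespace Triangle

variable (T : Triangle)

lemma exists_linearMap_lam_sub (l : Fin 3) :
    ∃ L : V2 →ₗ[ℝ] ℝ, ∀ x y, T.lam l x - T.lam l y = L (x - y) := by
  obtain ⟨L, c, hL⟩ := T.lam_affine l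
  exact ⟨L, fun x y => by rw [hL, hL, map_sub]; ring⟩

lemma isPolyDeg_lam (l : Fin 3) : IsPolyDeg 1 (T.lam l) := by
  obtain ⟨L, c, hL⟩ := T.lam_affine l
  have h : T.lam l = fun x => L (1, 0) * x.1 + L (0, 1) * x.2 + c := by
    funext x
    have hx : x = x.1 • ((1 : ℝ), (0 : ℝ)) + x.2 • ((0 : ℝ), (1 : ℝ)) := by ext <;> simp
    conv_lhs => rw [hL, hx]
    simp only [map_add, map_smul, smul_eq_mul]
    ring
  rw [h]
  exact ((isPolyDeg_fst.const_mul _).add (isPolyDeg_snd.const_mul _)).add (isPolyDeg_const 1 c)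

lemma nrm_dot_tang_ne_zero {i m : Fin 3} (hm : m ≠ i) : dot2 (T.nrm i) (T.tang m) ≠ 0 := by
  intro h
  obtain ⟨L, hL⟩ := T.exists_linearMap_lam_sub i
  obtain ⟨ci, hci⟩ := T.tang_parallel i
  obtain ⟨cm, hcm⟩ := T.tang_parallel m
  have hn := dot2_self_eq_one (T.nrm_unit i)
  -- `n_i ⊥ t_m` makes `e_m` parallel to `e_i`, but the linear part of `λ_i` kills `e_i` and not `e_m`
  have hLi : L (T.a (i + 2) - T.a (i + 1)) = 0 := by
    rw [← hL, T.lam_apply, T.lam_apply]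
    simp
  have hLm : L (T.a (m + 2) - T.a (m + 1)) ≠ 0 := by
    rw [← hL, T.lam_apply, T.lam_apply]
    rcases fin3_eq_add_one_or_eq_add_two hm.symm with rfl | rfl <;> simp
  have hei : T.a (i + 2) - T.a (i + 1) ≠ 0 := sub_ne_zero.mpr (T.indep.injective.ne (by simp))
  rw [hcm, eq_smul_perp_of_dot2_eq_zero hn h, map_smul, map_smul] at hLm
  rw [hci, eq_smul_perp_of_dot2_eq_zero hn (T.nrm_orth i), smul_smul] at hLi hei
  rw [map_smul, smul_eq_mul, mul_eq_zero] at hLi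
  exact hei (by rw [hLi.resolve_right (right_ne_zero_of_smul (right_ne_zero_of_smul hLm)), zero_smul])

lemma lam_epara (l m : Fin 3) (s : ℝ) :
    T.lam l (epara T m s) = (1 - s) * T.lam l (T.a (m + 1)) + s * T.lam l (T.a (m + 2)) := by
  obtain ⟨L, c, hL⟩ := T.lam_affine l
  simp only [epara, seg, hL, map_add, map_smul, map_sub, smul_eq_mul]
  ring

lemma lam_epara_self (m : Fin 3) (s : ℝ) : T.lam m (epara T m s) = 0 := by
  simp [lam_epara, lam_apply]

lemma lam_add_one_epara (m : Fin 3) (s : ℝ) : T.lam (m + 1) (epara T m s) = 1 - s := by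
  simp [lam_epara, lam_apply]

lemma lam_add_two_epara (m : Fin 3) (s : ℝ) : T.lam (m + 2) (epara T m s) = s := by
  simp [lam_epara, lam_apply]

end Triangle

section phiN0

variable (T : Triangle) (i : Fin 3)

lemma isVPolyDeg_phiN0 : IsVPolyDeg 2 (phiN0 T i) := by
  have bubble : ∀ l, IsPolyDeg 2 (fun x => T.lam l x * (3 * T.lam l x - 2)) := fun l =>
    (T.isPolyDeg_lam l).mul (((T.isPolyDeg_lam l).const_mul 3).sub (isPolyDeg_const 1 2))
  have combo : ∀ α β γ : ℝ, IsPolyDeg 2 (fun x =>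
      α * (T.lam (i + 1) x * (3 * T.lam (i + 1) x - 2)) +
        β * (T.lam (i + 2) x * (3 * T.lam (i + 2) x - 2)) +
          γ * (T.lam (i + 1) x * T.lam (i + 2) x)) := fun α β γ =>
    (((bubble _).const_mul α).add ((bubble _).const_mul β)).add
      (((T.isPolyDeg_lam _).mul (T.isPolyDeg_lam _)).const_mul γ)
  constructor
  · convert combo ((T.tang (i + 2)).1 / dot2 (T.nrm i) (T.tang (i + 2)))
      ((T.tang (i + 1)).1 / dot2 (T.nrm i) (T.tang (i + 1))) (6 * (T.nrm i).1) using 2 with x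
    simp only [phiN0, Prod.fst_add, Prod.smul_fst, smul_eq_mul]
    ring
  · convert combo ((T.tang (i + 2)).2 / dot2 (T.nrm i) (T.tang (i + 2)))
      ((T.tang (i + 1)).2 / dot2 (T.nrm i) (T.tang (i + 1))) (6 * (T.nrm i).2) using 2 with x
    simp only [phiN0, Prod.snd_add, Prod.smul_snd, smul_eq_mul]
    ring

lemma dot2_phiN0 (x w : V2) :
    dot2 (phiN0 T i x) w =
      T.lam (i + 1) x * (3 * T.lam (i + 1) x - 2) / dot2 (T.nrm i) (T.tang (i + 2))
          * dot2 (T.tang (i + 2)) w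
        + T.lam (i + 2) x * (3 * T.lam (i + 2) x - 2) / dot2 (T.nrm i) (T.tang (i + 1))
          * dot2 (T.tang (i + 1)) w
        + 6 * T.lam (i + 1) x * T.lam (i + 2) x * dot2 (T.nrm i) w := by
  simp only [phiN0, dot2, Prod.fst_add, Prod.snd_add, Prod.smul_fst, Prod.smul_snd, smul_eq_mul]
  ring

lemma dot2_phiN0_epara_nrm_self (s : ℝ) : dot2 (phiN0 T i (epara T i s)) (T.nrm i) = 1 := by
  have hk : dot2 (T.nrm i) (T.tang (i + 2)) ≠ 0 := T.nrm_dot_tang_ne_zero (by simp)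
  have hj : dot2 (T.nrm i) (T.tang (i + 1)) ≠ 0 := T.nrm_dot_tang_ne_zero (by simp)
  rw [dot2_phiN0, T.lam_add_one_epara, T.lam_add_two_epara, dot2_comm (T.tang (i + 2)),
    dot2_comm (T.tang (i + 1)), dot2_self_eq_one (T.nrm_unit i)]
  field_simp
  ring

lemma dot2_phiN0_epara_nrm_of_ne {m : Fin 3} (hm : m ≠ i) (s : ℝ) :
    dot2 (phiN0 T i (epara T m s)) (T.nrm m) = 0 := by
  rcases fin3_eq_add_one_or_eq_add_two hm with rfl | rfl
  · rw [dot2_phiN0, T.lam_epara_self, dot2_comm (T.tang (i + 1)), T.nrm_orth]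
    ring
  · rw [dot2_phiN0, T.lam_epara_self, dot2_comm (T.tang (i + 2)), T.nrm_orth]
    ring

lemma exists_dot2_phiN0_epara_tang (m : Fin 3) : ∃ a b : ℝ, ∀ s,
    dot2 (phiN0 T i (epara T m s)) (T.tang m) =
      a * ((1 - s) * (3 * (1 - s) - 2)) + b * (s * (3 * s - 2)) := by
  by_cases hm : m = i
  · subst hm
    refine ⟨dot2 (T.tang (m + 2)) (T.tang m) / dot2 (T.nrm m) (T.tang (m + 2)),
      dot2 (T.tang (m + 1)) (T.tang m) / dot2 (T.nrm m) (T.tang (m + 1)), fun s => ?_⟩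
    rw [dot2_phiN0, T.lam_add_one_epara, T.lam_add_two_epara, T.nrm_orth]
    ring
  rcases fin3_eq_add_one_or_eq_add_two hm with rfl | rfl
  · refine ⟨dot2 (T.tang (i + 1)) (T.tang (i + 1)) / dot2 (T.nrm i) (T.tang (i + 1)), 0,
      fun s => ?_⟩
    have hk : T.lam (i + 2) (epara T (i + 1) s) = 1 - s := by
      simpa [add_assoc] using T.lam_add_one_epara (i + 1) s
    rw [dot2_phiN0, T.lam_epara_self, hk]
    ring
  · refine ⟨0, dot2 (T.tang (i + 2)) (T.tang (i + 2)) / dot2 (T.nrm i) (T.tang (i + 2)),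
      fun s => ?_⟩
    have hj : T.lam (i + 1) (epara T (i + 2) s) = s := by
      simpa [add_assoc] using T.lam_add_two_epara (i + 2) s
    rw [dot2_phiN0, T.lam_epara_self, hj]
    ring

lemma normalP1_phiN0 : NormalP1 T (phiN0 T i) := by
  intro m
  by_cases hm : m = i
  · subst hm
    exact ⟨1, 0, fun s _ => by rw [dot2_phiN0_epara_nrm_self]; ring⟩
  · exact ⟨0, 0, fun s _ => by rw [dot2_phiN0_epara_nrm_of_ne T i hm]; ring⟩

lemma fN0_phiN0_self : fN0 T i (phiN0 T i) = 1 := by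
  simp [fN0, dot2_phiN0_epara_nrm_self]

lemma fN1_phiN0_self : fN1 T i (phiN0 T i) = 0 := by
  have h : ∀ s : ℝ, dot2 (phiN0 T i (epara T i s)) (T.nrm i) *
      (T.lam (i + 1) (epara T i s) - T.lam (i + 2) (epara T i s)) = 1 + (-2) * s + 0 * s ^ 2 :=
    fun s => by rw [dot2_phiN0_epara_nrm_self, T.lam_add_one_epara, T.lam_add_two_epara]; ring
  simp only [fN1, h, integral_quadratic]
  norm_num

lemma fT0_phiN0 (m : Fin 3) : fT0 T m (phiN0 T i) = 0 := by
  obtain ⟨a, b, h⟩ := exists_dot2_phiN0_epara_tang T i m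
  simp only [fT0, h, integral_bubble_pair]

lemma fN0_phiN0_of_ne {m : Fin 3} (hm : m ≠ i) : fN0 T m (phiN0 T i) = 0 := by
  simp [fN0, dot2_phiN0_epara_nrm_of_ne T i hm]

lemma fN1_phiN0_of_ne {m : Fin 3} (hm : m ≠ i) : fN1 T m (phiN0 T i) = 0 := by
  simp [fN1, dot2_phiN0_epara_nrm_of_ne T i hm]

end phiN0

/-- `φ_{n_i,0} ∈ P^{2-}(T)`, its mean normal component over `e_i` is `1`,
and all eight other sBDFM nodal functionals vanish on it. -/
theorem stmt8 (T : Triangle) (i : Fin 3) :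
    memP2m T (phiN0 T i) ∧
    fN0 T i (phiN0 T i) = 1 ∧ fN1 T i (phiN0 T i) = 0 ∧ fT0 T i (phiN0 T i) = 0 ∧
    ∀ i' : Fin 3, i' ≠ i →
      fN0 T i' (phiN0 T i) = 0 ∧ fN1 T i' (phiN0 T i) = 0 ∧ fT0 T i' (phiN0 T i) = 0 :=
  ⟨⟨isVPolyDeg_phiN0 T i, normalP1_phiN0 T i⟩, fN0_phiN0_self T i, fN1_phiN0_self T i,
    fT0_phiN0 T i i, fun _ hm =>
      ⟨fN0_phiN0_of_ne T i hm, fN1_phiN0_of_ne T i hm, fT0_phiN0 T i _⟩⟩
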